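/- Let f : ℝ → ℝ² be injective and continuous on [0,1] with finite length eVariationOn f (Set.Icc 0 1) = ENNReal.ofReal L, and set C = f '' (Set.Icc 0 1). Then for every ε > 0 there exists δ > 0 such that for every map g : ℝ → ℝ² continuous on [0,1] whose range C' = g '' (Set.Icc 0 1) satisfies Metric.hausdorffDist C C' ≤ δ, one has eVariationOn g (Set.Icc 0 1) ≥ ENNReal.ofReal (L − ε). In other words, any curve sufficiently Hausdorff-close to a simple rectifiable curve C is at least nearly as long as C. (Lower-semicontinuity claim established in the proof of Theorem 2.4.) -/

import Mathlib

local notation "ℝ²" => EuclideanSpace ℝ (Fin 2)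

/-!
Fix a partition `u 0 ≤ ⋯ ≤ u N` of `[0, 1]` whose chord sum for `f` is almost `L`. It suffices to
find parameters `v 0, …, v N` of `g`, monotone or antitone, with `g (v j)` close to `f (u j)`: the
chord sum of `g` along `v` is then almost that of `f` along `u`. To find them, walk along `g` in
small steps from a point near `f (u 0)` to a point near `f (u N)` and pick, for each point visited,
a nearby point of `C`. As `f` is injective on a compact set, its inverse is uniformly continuous, so
the parameters of these points of `C` move in small steps from near `u 0` to near `u N`; a discrete
intermediate value argument shows that they pass near every `u j`, in order.
-/

open Set OrderDual

theorem sum_edist_eq_ofReal_sum_dist {E : Type*} [PseudoMetricSpace E] (x : ℕ → E) (n : ℕ) :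
    ∑ i ∈ Finset.range n, edist (x (i + 1)) (x i)
      = ENNReal.ofReal (∑ i ∈ Finset.range n, dist (x (i + 1)) (x i)) := by
  rw [ENNReal.ofReal_sum_of_nonneg fun i _ => dist_nonneg]
  exact Finset.sum_congr rfl fun i _ => edist_dist _ _

theorem sum_dist_le_sum_dist_add {E : Type*} [PseudoMetricSpace E] {x y : ℕ → E} {N : ℕ} {r : ℝ}
    (h : ∀ j ≤ N, dist (x j) (y j) ≤ r) :
    ∑ i ∈ Finset.range N, dist (x (i + 1)) (x i)
      ≤ ∑ i ∈ Finset.range N, dist (y (i + 1)) (y i) + N * (2 * r) := by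
  calc ∑ i ∈ Finset.range N, dist (x (i + 1)) (x i)
      ≤ ∑ i ∈ Finset.range N, (dist (y (i + 1)) (y i) + 2 * r) := by
        refine Finset.sum_le_sum fun i hi => ?_
        have hi : i < N := Finset.mem_range.1 hi
        linarith [dist_triangle4 (x (i + 1)) (y (i + 1)) (y i) (x i), h (i + 1) hi,
          h i hi.le, dist_comm (x i) (y i)]
    _ = _ := by rw [Finset.sum_add_distrib, Finset.sum_const, Finset.card_range, nsmul_eq_mul]

namespace eVariationOn

variable {α E : Type*} [LinearOrder α]

theorem sum_le_of_antitone [PseudoEMetricSpace E] {f : α → E} {s : Set α} {n : ℕ} {u : ℕ → α}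
    (hu : Antitone u) (us : ∀ i, u i ∈ s) :
    ∑ i ∈ Finset.range n, edist (f (u (i + 1))) (f (u i)) ≤ eVariationOn f s := by
  rw [← comp_ofDual]
  exact sum_le (f := f ∘ ofDual) (u := toDual ∘ u) hu.dual_right us

variable [PseudoMetricSpace E] {f : α → E} {s : Set α}

theorem ofReal_sum_dist_le {n : ℕ} {u : ℕ → α} (hu : Monotone u ∨ Antitone u)
    (us : ∀ i, u i ∈ s) :
    ENNReal.ofReal (∑ i ∈ Finset.range n, dist (f (u (i + 1))) (f (u i))) ≤ eVariationOn f s :=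
  (sum_edist_eq_ofReal_sum_dist (f ∘ u) n).symm.trans_le
    (hu.elim (sum_le · us) (sum_le_of_antitone · us))

theorem exists_lt_sum_dist {x : ℝ} (h : ENNReal.ofReal x < eVariationOn f s) :
    ∃ (n : ℕ) (u : ℕ → α), Monotone u ∧ (∀ i, u i ∈ s) ∧
      x < ∑ i ∈ Finset.range n, dist (f (u (i + 1))) (f (u i)) := by
  obtain ⟨⟨n, u, hu, us⟩, hlt⟩ := lt_iSup_iff.1 h
  exact ⟨n, u, hu, us,
    (ENNReal.ofReal_lt_ofReal_iff'.1 (hlt.trans_eq (sum_edist_eq_ofReal_sum_dist (f ∘ u) n))).1⟩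

end eVariationOn

theorem IsCompact.exists_pos_forall_dist_lt_of_injOn {X Y : Type*} [PseudoMetricSpace X]
    [MetricSpace Y] {f : X → Y} {K : Set X} (hK : IsCompact K) (hf : ContinuousOn f K)
    (hinj : InjOn f K) {η : ℝ} (hη : 0 < η) :
    ∃ d > 0, ∀ x ∈ K, ∀ y ∈ K, dist (f x) (f y) < d → dist x y < η := by
  set T := (K ×ˢ K) ∩ {p | η ≤ dist p.1 p.2}
  have hT : IsCompact T := (hK.prod hK).inter_right (isClosed_le continuous_const continuous_dist)
  have hcont : ContinuousOn (fun p : X × X => dist (f p.1) (f p.2)) T :=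
    continuous_dist.comp_continuousOn <|
      (hf.comp continuousOn_fst fun p hp => hp.1.1).prodMk
        (hf.comp continuousOn_snd fun p hp => hp.1.2)
  have hpos : ∀ p ∈ T, 0 < dist (f p.1) (f p.2) := by
    rintro p ⟨⟨hx, hy⟩, hxy : η ≤ dist p.1 p.2⟩
    refine dist_pos.2 (hinj.ne hx hy fun h => ?_)
    rw [h, dist_self] at hxy
    linarith
  obtain ⟨d, hd, hdT⟩ := hT.exists_forall_le' hcont hpos
  refine ⟨d, hd, fun x hx y hy hfxy => ?_⟩
  by_contra! hxy
  exact (hdT (x, y) ⟨⟨hx, hy⟩, hxy⟩).not_gt hfxy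

theorem exists_dist_le_of_hausdorffDist_image_le {α X : Type*} [TopologicalSpace α]
    [PseudoMetricSpace X] {f g : α → X} {s : Set α} (hs : IsCompact s) (hf : ContinuousOn f s)
    (hg : ContinuousOn g s) {δ : ℝ} (h : Metric.hausdorffDist (f '' s) (g '' s) ≤ δ) :
    ∀ x ∈ s, ∃ y ∈ s, dist (f x) (g y) ≤ δ := by
  intro x hx
  have hfs := hs.image_of_continuousOn hf
  have hgs := hs.image_of_continuousOn hg
  have hfin := Metric.hausdorffEDist_ne_top_of_nonempty_of_bounded ⟨f x, mem_image_of_mem f hx⟩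
    ⟨g x, mem_image_of_mem g hx⟩ hfs.isBounded hgs.isBounded
  obtain ⟨_, ⟨y, hy, rfl⟩, hxy⟩ := hgs.exists_infDist_eq_dist ⟨g x, mem_image_of_mem g hx⟩ (f x)
  exact ⟨y, hy, hxy ▸ (Metric.infDist_le_hausdorffDist_of_mem (mem_image_of_mem f hx) hfin).trans h⟩

theorem exists_monotone_dist_lt_of_dist_succ_lt {P u : ℕ → ℝ} {M N : ℕ} {η : ℝ} (hu : Monotone u)
    (hstep : ∀ k, dist (P (k + 1)) (P k) < η) (h0 : dist (P 0) (u 0) < η)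
    (hM : dist (P M) (u N) < η) :
    ∃ κ : ℕ → ℕ, Monotone κ ∧ ∀ j ≤ N, dist (P (κ j)) (u j) < η := by
  classical
  simp only [Real.dist_eq, abs_lt] at hstep h0 hM ⊢
  -- clamping `j` at `N` makes `P` reach the threshold for every `j`, so `κ` is defined on all of `ℕ`
  have hex : ∀ j, ∃ k, u (min j N) - η < P k := fun j =>
    ⟨M, by linarith [hu (min_le_right j N)]⟩
  refine ⟨fun j => Nat.find (hex j), fun i j hij => Nat.find_mono fun k hk => ?_, fun j hj => ?_⟩
  · linarith [hu (min_le_min_right N hij)]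
  · have hju : u (min j N) = u j := by rw [min_eq_left hj]
    have hlow := Nat.find_spec (hex j)
    show -η < P (Nat.find (hex j)) - u j ∧ P (Nat.find (hex j)) - u j < η
    refine ⟨by linarith, ?_⟩
    rcases hk : Nat.find (hex j) with _ | k
    · linarith [hu (Nat.zero_le j)]
    · have hprev := Nat.find_min (hex j) (m := k) (by omega)
      rw [not_lt] at hprev
      rw [hk] at hlow
      linarith [hstep k]

theorem exists_chain_dist_lt_of_continuousOn_uIcc {X : Type*} [PseudoMetricSpace X] {g : ℝ → X}
    {a b : ℝ} (hg : ContinuousOn g (uIcc a b)) {r : ℝ} (hr : 0 < r) :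
    ∃ (M : ℕ) (q : ℕ → ℝ), (Monotone q ∨ Antitone q) ∧ q 0 = a ∧ q M = b ∧
      (∀ k, q k ∈ uIcc a b) ∧ ∀ k, dist (g (q (k + 1))) (g (q k)) < r := by
  obtain ⟨ρ, hρ, hgρ⟩ := Metric.uniformContinuousOn_iff.1
    (isCompact_uIcc.uniformContinuousOn_of_continuous hg) r hr
  obtain ⟨M, hM⟩ := exists_nat_gt (dist a b / ρ)
  have hM0 : (0 : ℝ) < M := (div_nonneg dist_nonneg hρ.le).trans_lt hM
  set t : ℕ → ℝ := fun k => (min k M : ℕ) / M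
  have ht_mono : Monotone t := fun i j hij => by
    simp only [t]; gcongr
  have ht_mem : ∀ k, t k ∈ Icc (0 : ℝ) 1 := fun k =>
    ⟨by positivity, div_le_one_of_le₀ (by exact_mod_cast min_le_right k M) hM0.le⟩
  have ht_step : ∀ k, dist (t (k + 1)) (t k) ≤ 1 / M := fun k => by
    rw [Real.dist_eq, ← sub_div, abs_div, abs_of_pos hM0]
    gcongr
    rcases (by omega : min (k + 1) M = min k M + 1 ∨ min (k + 1) M = min k M) with h | h <;>
      simp [h]
  have hq_mem : ∀ k, AffineMap.lineMap a b (t k) ∈ uIcc a b := fun k =>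
    segment_eq_uIcc a b ▸ lineMap_mem_segment ℝ a b (ht_mem k)
  refine ⟨M, fun k => AffineMap.lineMap a b (t k), ?_, ?_, ?_, hq_mem, fun k => ?_⟩
  · rcases le_total a b with hab | hab
    · exact .inl ((AffineMap.lineMap_mono hab).comp ht_mono)
    · exact .inr ((AffineMap.lineMap_anti hab).comp_monotone ht_mono)
  · simp [t]
  · simp [t, hM0.ne']
  · refine hgρ _ (hq_mem _) _ (hq_mem _) ?_
    rw [dist_lineMap_lineMap]
    calc dist (t (k + 1)) (t k) * dist a b ≤ 1 / M * dist a b := by gcongr; exact ht_step k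
      _ < ρ := by rw [one_div_mul_eq_div, div_lt_iff₀ hM0]; rwa [div_lt_iff₀ hρ, mul_comm] at hM

theorem exists_monotone_or_antitone_dist_lt_of_mutually_close {X : Type*} [PseudoMetricSpace X]
    {f g : ℝ → X} {s : Set ℝ} (hs : s.OrdConnected) (hg : ContinuousOn g s) {u : ℕ → ℝ}
    (hu : Monotone u) (hus : ∀ i, u i ∈ s) (N : ℕ) {η d δ ε : ℝ}
    (hinv : ∀ x ∈ s, ∀ y ∈ s, dist (f x) (f y) < d → dist x y < η)
    (hf : ∀ x ∈ s, ∀ y ∈ s, dist x y < η → dist (f x) (f y) < ε) (hδ : 2 * δ < d)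
    (hfg : ∀ x ∈ s, ∃ y ∈ s, dist (f x) (g y) ≤ δ)
    (hgf : ∀ y ∈ s, ∃ x ∈ s, dist (g y) (f x) ≤ δ) :
    ∃ v : ℕ → ℝ, (Monotone v ∨ Antitone v) ∧ (∀ j, v j ∈ s) ∧
      ∀ j ≤ N, dist (g (v j)) (f (u j)) < δ + ε := by
  obtain ⟨a, ha, hfa⟩ := hfg (u 0) (hus 0)
  obtain ⟨b, hb, hfb⟩ := hfg (u N) (hus N)
  have hab : uIcc a b ⊆ s := hs.uIcc_subset ha hb
  obtain ⟨M, q, hq_mono, hq0, hqM, hq_mem, hq_step⟩ :=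
    exists_chain_dist_lt_of_continuousOn_uIcc (hg.mono hab) (sub_pos.2 hδ)
  choose! π hπs hπ using hgf
  have hP : ∀ k, π (q k) ∈ s := fun k => hπs _ (hab (hq_mem k))
  have hgP : ∀ k, dist (g (q k)) (f (π (q k))) ≤ δ := fun k => hπ _ (hab (hq_mem k))
  have hπ_near : ∀ k, ∀ x ∈ s, dist (f x) (g (q k)) ≤ δ → dist (π (q k)) x < η :=
    fun k x hx hxk => hinv _ (hP k) _ hx <| by
      linarith [dist_triangle (f (π (q k))) (g (q k)) (f x), dist_comm (f (π (q k))) (g (q k)),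
        dist_comm (g (q k)) (f x), hgP k]
  obtain ⟨κ, hκ_mono, hκ⟩ := exists_monotone_dist_lt_of_dist_succ_lt (P := fun k => π (q k))
    (M := M) (N := N) hu
    (fun k => hinv _ (hP _) _ (hP _) <| by
      linarith [dist_triangle4 (f (π (q (k + 1)))) (g (q (k + 1))) (g (q k)) (f (π (q k))),
        dist_comm (f (π (q (k + 1)))) (g (q (k + 1))), hgP (k + 1), hgP k, hq_step k])
    (hπ_near 0 _ (hus 0) (hq0 ▸ hfa)) (hπ_near M _ (hus N) (hqM ▸ hfb))
  refine ⟨q ∘ κ, hq_mono.imp (·.comp hκ_mono) (·.comp_monotone hκ_mono),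
    fun j => hab (hq_mem _), fun j hj => ?_⟩
  calc dist (g (q (κ j))) (f (u j))
      ≤ dist (g (q (κ j))) (f (π (q (κ j)))) + dist (f (π (q (κ j)))) (f (u j)) :=
        dist_triangle _ _ _
    _ < δ + ε := add_lt_add_of_le_of_lt (hgP _) (hf _ (hP _) _ (hus j) (hκ j hj))

/-- Lower semicontinuity of length (from the proof of Theorem 2.4): any curve sufficiently
Hausdorff-close to a simple rectifiable curve of length `L` has length at least `L - ε`. -/
theorem stmt_9 (f : ℝ → ℝ²)
    (hfi : Set.InjOn f (Set.Icc 0 1)) (hfc : ContinuousOn f (Set.Icc 0 1))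
    (L : ℝ) (hL : eVariationOn f (Set.Icc 0 1) = ENNReal.ofReal L)
    (C : Set ℝ²) (hC : C = f '' Set.Icc 0 1) :
    ∀ ε > (0 : ℝ), ∃ δ > (0 : ℝ), ∀ g : ℝ → ℝ², ContinuousOn g (Set.Icc 0 1) →
      Metric.hausdorffDist C (g '' Set.Icc 0 1) ≤ δ →
      eVariationOn g (Set.Icc 0 1) ≥ ENNReal.ofReal (L - ε) := by
  subst hC
  intro ε hε
  rcases le_or_gt L ε with hLε | hLε
  · exact ⟨1, one_pos, fun g _ _ => by simp [ENNReal.ofReal_of_nonpos (sub_nonpos.2 hLε)]⟩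
  obtain ⟨N, u, hu, huI, hS⟩ := eVariationOn.exists_lt_sum_dist (x := L - ε / 2)
    (by rw [hL]; exact (ENNReal.ofReal_lt_ofReal_iff (by linarith)).2 (by linarith))
  set r := ε / (4 * (N + 1))
  have hNr : N * (2 * r) ≤ ε / 2 := by simp only [r]; field_simp; nlinarith
  obtain ⟨η, hη, hfη⟩ := Metric.uniformContinuousOn_iff.1
    (isCompact_Icc.uniformContinuousOn_of_continuous hfc) (r / 2) (by positivity)
  obtain ⟨d, hd, hinv⟩ := isCompact_Icc.exists_pos_forall_dist_lt_of_injOn hfc hfi hη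
  refine ⟨min (d / 4) (r / 2), by positivity, fun g hgc hCg => ?_⟩
  obtain ⟨v, hv_mono, hvI, hv⟩ := exists_monotone_or_antitone_dist_lt_of_mutually_close
    ordConnected_Icc hgc hu huI N hinv hfη (by linarith [min_le_left (d / 4) (r / 2)])
    (exists_dist_le_of_hausdorffDist_image_le isCompact_Icc hfc hgc hCg)
    (exists_dist_le_of_hausdorffDist_image_le isCompact_Icc hgc hfc
      (by rwa [Metric.hausdorffDist_comm] at hCg))
  have hsum := sum_dist_le_sum_dist_add (x := f ∘ u) (y := g ∘ v) (N := N) (r := r) fun j hj =>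
    dist_comm (g (v j)) (f (u j)) ▸ (hv j hj).le.trans (by linarith [min_le_right (d / 4) (r / 2)])
  calc ENNReal.ofReal (L - ε)
      ≤ ENNReal.ofReal (∑ i ∈ Finset.range N, dist (g (v (i + 1))) (g (v i))) :=
        ENNReal.ofReal_le_ofReal (by dsimp only [Function.comp_apply] at hsum; linarith)
    _ ≤ eVariationOn g (Icc 0 1) := eVariationOn.ofReal_sum_dist_le hv_mono hvI
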